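/- arXiv:cs/9902010 — 3 statements merged into one kernel-verified Lean document; each statement's English description precedes it below -/
import Mathlib

section
/- Privacy of the MSP secret sharing scheme: if B ⊆ P is unqualified, i.e., ε = (1,0,...,0) is not in the row span of M_B, then there exists a vector k ∈ K^e with M_B k = 0 and first coordinate k_1 = 1. Consequently, for any two secrets a, a' ∈ K and any sharing vector a_* with first coordinate a, the vector a_* + (a' − a)·k is a sharing vector with first coordinate a' giving B exactly the same shares: M_B(a_* + (a'−a)k) = M_B a_*. -/
/-!
Since `ε` lies outside the span of the rows of `M_B`, some linear functional vanishes on that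
span and takes the value `1` at `ε`. Writing the functional as `v ↦ v ⬝ᵥ k` gives a vector `k`
with `M_B k = 0` and `k 0 = ε ⬝ᵥ k = 1`; adding a multiple of `k` to a sharing vector moves its
secret at will without changing the shares of `B`.
-/

open Matrix

theorem Submodule.exists_dual_eq_one_of_notMem {K V : Type*} [Field K] [AddCommGroup V]
    [Module K V] {p : Submodule K V} {v : V} (hv : v ∉ p) :
    ∃ f : Module.Dual K V, f v = 1 ∧ ∀ w ∈ p, f w = 0 := by
  obtain ⟨f, hf_comp, hfv⟩ := LinearMap.exists_extend_of_notMem (0 : p →ₗ[K] K) hv 1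
  exact ⟨f, hfv, fun w hw => congr($hf_comp ⟨w, hw⟩)⟩

theorem Matrix.exists_mulVec_eq_zero_of_notMem_span {m n K : Type*} [Field K] [Fintype n]
    [DecidableEq n] (M : Matrix m n K) (S : Set m) {v : n → K}
    (hv : v ∉ Submodule.span K (M '' S)) :
    ∃ k : n → K, (∀ l ∈ S, (M *ᵥ k) l = 0) ∧ v ⬝ᵥ k = 1 := by
  obtain ⟨f, hfv, hf_span⟩ := Submodule.exists_dual_eq_one_of_notMem hv
  set k := (dotProductEquiv K n).symm f
  have hf_eq (w : n → K) : f w = w ⬝ᵥ k := by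
    rw [dotProduct_comm, ← dotProductEquiv_apply_apply, LinearEquiv.apply_symm_apply]
  refine ⟨k, fun l hl => ?_, by rw [← hf_eq, hfv]⟩
  rw [mulVec, ← hf_eq]
  exact hf_span _ (Submodule.subset_span ⟨l, hl, rfl⟩)

theorem Matrix.mulVec_add_smul_apply_of_mulVec_apply_eq_zero {m n R : Type*} [CommSemiring R]
    [Fintype n] (M : Matrix m n R) {k : n → R} {l : m} (hk : (M *ᵥ k) l = 0) (a : n → R)
    (c : R) : (M *ᵥ (a + c • k)) l = (M *ᵥ a) l := by
  simp [mulVec_add, mulVec_smul, hk]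

theorem msp_unqualified_privacy_general {P : Type*} (K : Type*) [Field K] (d e : ℕ)
    (M : Matrix (Fin d) (Fin (e + 1)) K) (ψ : Fin d → P)
    (B : Set P)
    (hB : (Pi.single (0 : Fin (e + 1)) (1 : K)) ∉
      Submodule.span K (M '' {l | ψ l ∈ B})) :
    ∃ k : Fin (e + 1) → K, (∀ l, ψ l ∈ B → M.mulVec k l = 0) ∧ k 0 = 1 ∧
      ∀ a a' : K, ∀ astar : Fin (e + 1) → K, astar 0 = a →
        ((astar + (a' - a) • k) 0 = a' ∧
          ∀ l, ψ l ∈ B → M.mulVec (astar + (a' - a) • k) l = M.mulVec astar l) := by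
  obtain ⟨k, hker, hεk⟩ := M.exists_mulVec_eq_zero_of_notMem_span _ hB
  have hk0 : k 0 = 1 := by rwa [single_dotProduct, one_mul] at hεk
  refine ⟨k, hker, hk0, fun a a' astar hastar => ⟨?_, fun l hl => ?_⟩⟩
  · simp [hastar, hk0]
  · exact M.mulVec_add_smul_apply_of_mulVec_apply_eq_zero (hker l hl) astar (a' - a)

/-- Privacy of MSP secret sharing: if `B` is unqualified (`ε` is not in the span
of the rows of `M_B`), then there is a kernel vector `k` of `M_B` with first
coordinate `1`; consequently for any secrets `a, a'` and sharing vector `astar` of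
`a`, the vector `astar + (a' - a) • k` shares `a'` and gives `B` the same shares. -/
theorem msp_unqualified_privacy {P : Type*} (K : Type*) [Field K] (d e : ℕ)
    (M : Matrix (Fin d) (Fin (e + 1)) K) (ψ : Fin d → P)
    (hψ : Function.Surjective ψ) (B : Set P)
    (hB : (Pi.single (0 : Fin (e + 1)) (1 : K)) ∉
      Submodule.span K (M '' {l | ψ l ∈ B})) :
    ∃ k : Fin (e + 1) → K, (∀ l, ψ l ∈ B → M.mulVec k l = 0) ∧ k 0 = 1 ∧
      ∀ a a' : K, ∀ astar : Fin (e + 1) → K, astar 0 = a →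
        ((astar + (a' - a) • k) 0 = a' ∧
          ∀ l, ψ l ∈ B → M.mulVec (astar + (a' - a) • k) l = M.mulVec astar l) :=
  msp_unqualified_privacy_general K d e M ψ B hB
end

section
/- If an MSP (K, M, ψ) has the multiplication property, then the adversary structure A_f it rejects is Q^2: for any partition of the players into B and P \ B, at least one of B, P \ B is qualified. -/
/-!
If neither `B` nor its complement is qualified, duality gives kernel vectors `k, k'` of the
restricted matrices with `k₀ = k'₀ = 1`. Every row of `M` belongs to `B` or to its complement,
so `(M k) * (M k')` vanishes coordinatewise, and the multiplication vector `r` yields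
`0 = ⟨r, (M k) * (M k')⟩ = k₀ k'₀ = 1`.
-/

open Matrix

theorem exists_dotProduct_eq_one_of_notMem_span {K n : Type*} [Field K] [Fintype n]
    [DecidableEq n] {s : Set (n → K)} {v : n → K} (hv : v ∉ Submodule.span K s) :
    ∃ k : n → K, v ⬝ᵥ k = 1 ∧ ∀ w ∈ s, w ⬝ᵥ k = 0 := by
  obtain ⟨f, hfv, hfs⟩ := Submodule.exists_dual_map_eq_bot_of_notMem hv inferInstance
  set k := (dotProductEquiv K n).symm f
  have hf (w : n → K) : f w = w ⬝ᵥ k := by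
    rw [dotProduct_comm, ← dotProductEquiv_apply_apply, LinearEquiv.apply_symm_apply]
  refine ⟨(v ⬝ᵥ k)⁻¹ • k, ?_, fun w hw => ?_⟩
  · rw [dotProduct_smul, smul_eq_mul, inv_mul_cancel₀ (hf v ▸ hfv)]
  · have hfw : f w = 0 := by
      simpa using hfs.le (Submodule.mem_map_of_mem (Submodule.subset_span hw))
    rw [dotProduct_smul, ← hf w, hfw, smul_zero]

theorem exists_mulVec_eq_zero_of_single_notMem_span {K m n : Type*} [Field K] [Fintype n]
    [DecidableEq n] (M : Matrix m n K) (S : Set m) (i : n)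
    (h : Pi.single i 1 ∉ Submodule.span K (M '' S)) :
    ∃ k : n → K, k i = 1 ∧ ∀ l ∈ S, (M *ᵥ k) l = 0 := by
  obtain ⟨k, hk, hkS⟩ := exists_dotProduct_eq_one_of_notMem_span h
  exact ⟨k, by simpa [single_dotProduct] using hk, fun l hl => hkS _ ⟨l, hl, rfl⟩⟩

theorem msp_with_multiplication_q2_general {P : Type*} (K : Type*) [Field K] (d e : ℕ)
    (M : Matrix (Fin d) (Fin (e + 1)) K) (ψ : Fin d → P)
    (r : Fin d → K)
    (hr : ∀ u v : Fin (e + 1) → K,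
      ∑ l, r l * (M.mulVec u l * M.mulVec v l) = u 0 * v 0)
    (B : Set P) :
    (Pi.single (0 : Fin (e + 1)) (1 : K)) ∈
        Submodule.span K (M '' {l | ψ l ∈ B}) ∨
      (Pi.single (0 : Fin (e + 1)) (1 : K)) ∈
        Submodule.span K (M '' {l | ψ l ∈ Bᶜ}) := by
  by_contra! ⟨hB, hBc⟩
  obtain ⟨k, hk0, hk⟩ := exists_mulVec_eq_zero_of_single_notMem_span M _ 0 hB
  obtain ⟨k', hk'0, hk'⟩ := exists_mulVec_eq_zero_of_single_notMem_span M _ 0 hBc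
  have hprod : ∀ l, (M *ᵥ k) l * (M *ᵥ k') l = 0 := fun l => by
    by_cases hl : ψ l ∈ B
    · rw [hk l hl, zero_mul]
    · rw [hk' l hl, mul_zero]
  have := hr k k'
  simp only [hprod, mul_zero, Finset.sum_const_zero, hk0, hk'0, mul_one] at this
  exact zero_ne_one this

/-- If an MSP has the multiplication property then its adversary structure is
`Q^2`: for any set `B` of players, at least one of `B` and its complement is
qualified. -/
theorem msp_with_multiplication_q2 {P : Type*} (K : Type*) [Field K] (d e : ℕ)
    (M : Matrix (Fin d) (Fin (e + 1)) K) (ψ : Fin d → P)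
    (hψ : Function.Surjective ψ) (r : Fin d → K)
    (hr : ∀ u v : Fin (e + 1) → K,
      ∑ l, r l * (M.mulVec u l * M.mulVec v l) = u 0 * v 0)
    (B : Set P) :
    (Pi.single (0 : Fin (e + 1)) (1 : K)) ∈
        Submodule.span K (M '' {l | ψ l ∈ B}) ∨
      (Pi.single (0 : Fin (e + 1)) (1 : K)) ∈
        Submodule.span K (M '' {l | ψ l ∈ Bᶜ}) :=
  msp_with_multiplication_q2_general K d e M ψ r hr B
end

section
/- A counting lower bound: the number of distinct adversary structures over n players that are Q^2 is at least 2^(C(n-1, ⌊(n-1)/2⌋)), and hence superpolynomially many; consequently not all families of Q^2 adversary structures over n players can be rejected by monotone span programs of size polynomial in n. -/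
/-!
Fix a player `a` and a size `k`. Every family `𝒮` of `k`-subsets of the other players generates,
by downward closure, an adversary structure all of whose members miss `a`; hence no two of them
cover the player set, so the structure is `Q²`. A family of equal-size sets is an antichain, and
an antichain is recovered from its downward closure as its set of maximal elements, so distinct
`𝒮` give distinct structures. There are `2 ^ C(n - 1, k)` such families.
-/

open Finset

variable {α : Type*} [DecidableEq α]

def downClosure (𝒜 : Finset (Finset α)) : Finset (Finset α) := 𝒜.biUnion powerset

theorem mem_downClosure {𝒜 : Finset (Finset α)} {s : Finset α} :
    s ∈ downClosure 𝒜 ↔ ∃ t ∈ 𝒜, s ⊆ t := by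
  simp [downClosure]

theorem subset_downClosure (𝒜 : Finset (Finset α)) : 𝒜 ⊆ downClosure 𝒜 :=
  fun s hs => mem_downClosure.2 ⟨s, hs, Subset.rfl⟩

theorem mem_downClosure_of_subset {𝒜 : Finset (Finset α)} {s t : Finset α}
    (ht : t ∈ downClosure 𝒜) (hst : s ⊆ t) : s ∈ downClosure 𝒜 := by
  obtain ⟨u, hu, htu⟩ := mem_downClosure.1 ht
  exact mem_downClosure.2 ⟨u, hu, hst.trans htu⟩

theorem notMem_of_mem_downClosure {𝒜 : Finset (Finset α)} {a : α} (h𝒜 : ∀ t ∈ 𝒜, a ∉ t)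
    {s : Finset α} (hs : s ∈ downClosure 𝒜) : a ∉ s := by
  obtain ⟨t, ht, hst⟩ := mem_downClosure.1 hs
  exact fun has => h𝒜 t ht (hst has)

theorem union_ne_univ_of_mem_downClosure [Fintype α] {𝒜 : Finset (Finset α)} {a : α}
    (h𝒜 : ∀ t ∈ 𝒜, a ∉ t) {s s' : Finset α} (hs : s ∈ downClosure 𝒜)
    (hs' : s' ∈ downClosure 𝒜) : s ∪ s' ≠ univ := by
  intro hunion
  have ha : a ∈ s ∪ s' := hunion ▸ mem_univ a
  rcases mem_union.1 ha with has | has'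
  · exact notMem_of_mem_downClosure h𝒜 hs has
  · exact notMem_of_mem_downClosure h𝒜 hs' has'

theorem subset_of_downClosure_eq {𝒜 ℬ : Finset (Finset α)}
    (h𝒜 : IsAntichain (· ⊆ ·) (𝒜 : Set (Finset α)))
    (h : downClosure 𝒜 = downClosure ℬ) : 𝒜 ⊆ ℬ := by
  intro s hs
  obtain ⟨t, htℬ, hst⟩ := mem_downClosure.1 (h ▸ subset_downClosure 𝒜 hs)
  obtain ⟨u, hu𝒜, htu⟩ := mem_downClosure.1 (h ▸ subset_downClosure ℬ htℬ)
  have hsu : s = u := h𝒜.eq hs hu𝒜 (hst.trans htu)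
  rwa [Subset.antisymm hst (hsu ▸ htu)]

theorem eq_of_downClosure_eq {𝒜 ℬ : Finset (Finset α)}
    (h𝒜 : IsAntichain (· ⊆ ·) (𝒜 : Set (Finset α)))
    (hℬ : IsAntichain (· ⊆ ·) (ℬ : Set (Finset α)))
    (h : downClosure 𝒜 = downClosure ℬ) : 𝒜 = ℬ :=
  Subset.antisymm (subset_of_downClosure_eq h𝒜 h) (subset_of_downClosure_eq hℬ h.symm)

theorem two_pow_choose_le_card_q2 [Fintype α] (a : α) (k : ℕ) :
    2 ^ (Fintype.card α - 1).choose k ≤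
      Nat.card {A : Finset (Finset α) //
        (∀ B ∈ A, ∀ B' ⊆ B, B' ∈ A) ∧ ∀ B ∈ A, ∀ C ∈ A, B ∪ C ≠ univ} := by
  set 𝒦 := (univ.erase a).powersetCard k
  have notMem_of_mem_𝒦 {𝒮 : Finset (Finset α)} (h𝒮 : 𝒮 ⊆ 𝒦) : ∀ t ∈ 𝒮, a ∉ t :=
    fun t ht hat => notMem_erase a univ ((mem_powersetCard.1 (h𝒮 ht)).1 hat)
  have antichain_of_mem_𝒦 {𝒮 : Finset (Finset α)} (h𝒮 : 𝒮 ⊆ 𝒦) :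
      IsAntichain (· ⊆ ·) (𝒮 : Set (Finset α)) :=
    ((Set.sized_powersetCard _ k).mono (coe_subset.2 h𝒮)).isAntichain
  let Φ : 𝒦.powerset → {A : Finset (Finset α) //
      (∀ B ∈ A, ∀ B' ⊆ B, B' ∈ A) ∧ ∀ B ∈ A, ∀ C ∈ A, B ∪ C ≠ univ} :=
    fun 𝒮 => ⟨downClosure 𝒮.1, fun _ hB _ hB' => mem_downClosure_of_subset hB hB',
      fun _ hB _ hC => union_ne_univ_of_mem_downClosure
        (notMem_of_mem_𝒦 (mem_powerset.1 𝒮.2)) hB hC⟩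
  have hΦ : Function.Injective Φ := fun 𝒮 𝒯 h => Subtype.ext <|
    eq_of_downClosure_eq (antichain_of_mem_𝒦 (mem_powerset.1 𝒮.2))
      (antichain_of_mem_𝒦 (mem_powerset.1 𝒯.2)) (congrArg Subtype.val h)
  calc 2 ^ (Fintype.card α - 1).choose k = Nat.card 𝒦.powerset := by
        rw [Nat.card_eq_fintype_card, Fintype.card_coe, card_powerset, card_powersetCard,
          card_erase_of_mem (mem_univ a), card_univ]
    _ ≤ _ := Nat.card_le_card_of_injective Φ hΦ

/-- Counting lower bound: there are at least `2 ^ (C(n-1, ⌊(n-1)/2⌋))` distinct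
`Q^2` adversary structures (downward-closed families no two of whose members
cover the player set) over `n ≥ 1` players. -/
theorem q2_structures_counting_lower_bound (n : ℕ) (hn : 1 ≤ n) :
    2 ^ Nat.choose (n - 1) ((n - 1) / 2) ≤
      Nat.card {A : Finset (Finset (Fin n)) //
        (∀ B ∈ A, ∀ B' ⊆ B, B' ∈ A) ∧
          ∀ B ∈ A, ∀ C ∈ A, B ∪ C ≠ Finset.univ} := by
  simpa using two_pow_choose_le_card_q2 (⟨0, hn⟩ : Fin n) ((n - 1) / 2)
end
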